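/- arXiv:1407.3169 — 4 statements merged into one kernel-verified Lean document; each statement's English description precedes it below -/
import Mathlib

section
/- Let X and Y be topological spaces. If Y is totally separated (any two distinct points are separated by a clopen set), then for every x in X, the quasi-component of x equals the set of points y such that f(x) = f(y) for every continuous function f : X → Y. -/
/-- The quasi-component of a point: the intersection of all clopen sets containing it. -/
def quasiComponent {X : Type*} [TopologicalSpace X] (x : X) : Set X :=
  ⋂₀ {U : Set X | IsClopen U ∧ x ∈ U}

section QuasiComponent

variable {X Y : Type*} [TopologicalSpace X] [TopologicalSpace Y] {x y : X}

theorem mem_quasiComponent_iff :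
    y ∈ quasiComponent x ↔ ∀ U : Set X, IsClopen U → x ∈ U → y ∈ U := by
  simp [quasiComponent]

theorem ContinuousMap.apply_eq_of_mem_quasiComponent [TotallySeparatedSpace Y] (f : C(X, Y))
    (hy : y ∈ quasiComponent x) : f x = f y := by
  by_contra hne
  obtain ⟨V, hV, hfx, hfy⟩ := exists_isClopen_of_totally_separated hne
  exact hfy (mem_quasiComponent_iff.mp hy _ (hV.preimage f.continuous) hfx)

theorem mem_quasiComponent_of_forall_apply_eq [Nontrivial Y]
    (h : ∀ f : C(X, Y), f x = f y) : y ∈ quasiComponent x := by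
  refine mem_quasiComponent_iff.mpr fun U hU hxU => ?_
  obtain ⟨a, b, hab⟩ := exists_pair_ne Y
  let g : C(Bool, Y) := ⟨fun t => bif t then a else b, continuous_of_discreteTopology⟩
  let indicator : C(X, Bool) := ⟨U.boolIndicator, (continuous_boolIndicator_iff_isClopen U).mpr hU⟩
  have hgx : g (indicator x) = a := by
    simp [g, indicator, (U.mem_iff_boolIndicator x).mp hxU]
  by_contra hyU
  have hgy : g (indicator y) = b := by
    simp [g, indicator, (U.notMem_iff_boolIndicator y).mp hyU]
  exact hab (hgx.symm.trans <| (h (g.comp indicator)).trans hgy)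

end QuasiComponent

theorem stmt0 {X Y : Type*} [TopologicalSpace X] [TopologicalSpace Y]
    [TotallySeparatedSpace Y] [Nontrivial Y] (x : X) :
    quasiComponent x = {y : X | ∀ f : C(X, Y), f x = f y} :=
  Set.ext fun _ =>
    ⟨fun hy f => f.apply_eq_of_mem_quasiComponent hy, mem_quasiComponent_of_forall_apply_eq⟩
end

section
/- Let Z be a totally separated space and Y have an absorbing element 0, a unit 1 ≠ 0, and continuous characteristic functions for clopen sets. If I is a multiplicative ideal of C(Z,Y) whose common zero set V(I) contains two or more points, then I is not prime. -/
/-- Pointwise multiplication of continuous maps into a topological magma. -/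
def pmul {Z Y : Type*} [TopologicalSpace Z] [TopologicalSpace Y] [Mul Y]
    (hc : Continuous fun p : Y × Y => p.1 * p.2) (f g : C(Z, Y)) : C(Z, Y) :=
  ⟨fun z => f z * g z, hc.comp (f.continuous.prodMk g.continuous)⟩

/-!
Separate two common zeros `z₁ ∈ U`, `z₂ ∉ U` of `I` by a clopen set `U`. Since `0` is absorbing,
`χ_U · χ_{Uᶜ}` is identically `0` and hence lies in `I`, whereas `χ_U (z₂) = 1` and
`χ_{Uᶜ} (z₁) = 1`, so neither factor lies in `I`.
-/

section

variable {Z Y : Type*} [TopologicalSpace Z] [TopologicalSpace Y] [Mul Y]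
  {hc : Continuous fun p : Y × Y => p.1 * p.2}

@[simp]
theorem pmul_apply (f g : C(Z, Y)) (z : Z) : pmul hc f g z = f z * g z :=
  rfl

theorem pmul_eq_const_of_eqOn_of_eqOn_compl {y0 : Y} (habs : ∀ y : Y, y0 * y = y0 ∧ y * y0 = y0)
    {f g : C(Z, Y)} {U : Set Z} (hf : ∀ z ∈ U, f z = y0) (hg : ∀ z ∉ U, g z = y0) :
    pmul hc f g = ContinuousMap.const Z y0 := by
  ext z
  by_cases hz : z ∈ U
  · simp only [pmul_apply, hf z hz, (habs _).1, ContinuousMap.const_apply]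
  · simp only [pmul_apply, hg z hz, (habs _).2, ContinuousMap.const_apply]

end

theorem stmt10_general {Z Y : Type*} [TopologicalSpace Z] [TopologicalSpace Y]
    [TotallySeparatedSpace Z] [Mul Y]
    (hc : Continuous fun p : Y × Y => p.1 * p.2)
    (y0 y1 : Y) (habs : ∀ y : Y, y0 * y = y0 ∧ y * y0 = y0) (h10 : y1 ≠ y0)
    (hchar : ∀ U : Set Z, IsClopen U →
      ∃ χ : C(Z, Y), (∀ z ∈ U, χ z = y0) ∧ (∀ z ∉ U, χ z = y1))
    (I : Set C(Z, Y))
    (hITheta : ContinuousMap.const Z y0 ∈ I)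
    (hV : ∃ z1 z2 : Z, z1 ≠ z2 ∧ (∀ f ∈ I, f z1 = y0) ∧ (∀ f ∈ I, f z2 = y0)) :
    ¬ (I ≠ Set.univ ∧ ∀ f g : C(Z, Y), pmul hc f g ∈ I → f ∈ I ∨ g ∈ I) := by
  rintro ⟨-, hprime⟩
  obtain ⟨z1, z2, hz, hI1, hI2⟩ := hV
  obtain ⟨U, hU, hz1U, hz2U⟩ := exists_isClopen_of_totally_separated hz
  obtain ⟨χ, hχ0, hχ1⟩ := hchar U hU
  obtain ⟨ψ, hψ0, hψ1⟩ := hchar Uᶜ hU.compl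
  have hχψ : pmul hc χ ψ ∈ I :=
    pmul_eq_const_of_eqOn_of_eqOn_compl habs hχ0 hψ0 ▸ hITheta
  rcases hprime χ ψ hχψ with hχI | hψI
  · exact h10 (hχ1 z2 hz2U ▸ hI2 χ hχI)
  · exact h10 (hψ1 z1 (Set.notMem_compl_iff.mpr hz1U) ▸ hI1 ψ hψI)

theorem stmt10 {Z Y : Type*} [TopologicalSpace Z] [TopologicalSpace Y]
    [TotallySeparatedSpace Z] [Mul Y]
    (hc : Continuous fun p : Y × Y => p.1 * p.2)
    (y0 y1 : Y) (habs : ∀ y : Y, y0 * y = y0 ∧ y * y0 = y0) (h10 : y1 ≠ y0)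
    (hchar : ∀ U : Set Z, IsClopen U →
      ∃ χ : C(Z, Y), (∀ z ∈ U, χ z = y0) ∧ (∀ z ∉ U, χ z = y1))
    (I : Set C(Z, Y))
    (hITheta : ContinuousMap.const Z y0 ∈ I)
    (hIideal : ∀ f g : C(Z, Y), g ∈ I → pmul hc f g ∈ I)
    (hV : ∃ z1 z2 : Z, z1 ≠ z2 ∧ (∀ f ∈ I, f z1 = y0) ∧ (∀ f ∈ I, f z2 = y0)) :
    ¬ (I ≠ Set.univ ∧ ∀ f g : C(Z, Y), pmul hc f g ∈ I → f ∈ I ∨ g ∈ I) :=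
  stmt10_general hc y0 y1 habs h10 hchar I hITheta hV
end

section
/- Let Z be a totally separated space and Y have an absorbing 0 and unit 1 with no zero divisors, admitting continuous characteristic functions of clopen sets. Then for a nonempty subset U ⊆ Z, the ideal I(U) = {f ∈ C(Z,Y) : f vanishes on U} is prime if and only if U is a singleton. -/
section VanishingIdeal

variable {Z Y : Type*} [TopologicalSpace Z] [TopologicalSpace Y]

def vanishingOn (y0 : Y) (U : Set Z) : Set C(Z, Y) := {f | ∀ z ∈ U, f z = y0}

theorem vanishingOn_ne_univ {y0 y1 : Y} {U : Set Z} (hU : U.Nonempty) (h10 : y1 ≠ y0) :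
    vanishingOn y0 U ≠ Set.univ := by
  intro h
  obtain ⟨u, hu⟩ := hU
  have hconst : ContinuousMap.const Z y1 ∈ vanishingOn y0 U := h ▸ Set.mem_univ _
  exact h10 (hconst u hu)

def IsPrimeSet [Mul Y] (hc : Continuous fun p : Y × Y => p.1 * p.2) (I : Set C(Z, Y)) : Prop :=
  I ≠ Set.univ ∧ ∀ f g : C(Z, Y), pmul hc f g ∈ I → f ∈ I ∨ g ∈ I

variable [Mul Y] (hc : Continuous fun p : Y × Y => p.1 * p.2) {y0 y1 : Y}

theorem isPrimeSet_vanishingOn_singleton (h10 : y1 ≠ y0)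
    (hnzd : ∀ a b : Y, a * b = y0 → a = y0 ∨ b = y0) (z : Z) :
    IsPrimeSet hc (vanishingOn y0 {z}) := by
  refine ⟨vanishingOn_ne_univ (Set.singleton_nonempty z) h10, fun f g hfg => ?_⟩
  exact (hnzd _ _ (hfg z rfl)).imp (fun h w hw => Set.mem_singleton_iff.1 hw ▸ h)
    (fun h w hw => Set.mem_singleton_iff.1 hw ▸ h)

theorem pmul_apply_eq_of_disjoint_support (habs : ∀ y : Y, y0 * y = y0 ∧ y * y0 = y0)
    {f g : C(Z, Y)} (hfg : ∀ z, f z = y0 ∨ g z = y0) (z : Z) : pmul hc f g z = y0 := by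
  rcases hfg z with hf | hg
  · exact (congrArg (· * g z) hf).trans (habs _).1
  · exact (congrArg (f z * ·) hg).trans (habs _).2

theorem subsingleton_of_isPrimeSet_vanishingOn [TotallySeparatedSpace Z]
    (habs : ∀ y : Y, y0 * y = y0 ∧ y * y0 = y0) (h10 : y1 ≠ y0)
    (hchar : ∀ U : Set Z, IsClopen U →
      ∃ χ : C(Z, Y), (∀ z ∈ U, χ z = y0) ∧ (∀ z ∉ U, χ z = y1))
    {U : Set Z} (hprime : IsPrimeSet hc (vanishingOn y0 U)) : U.Subsingleton := by
  intro u hu v hv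
  by_contra huv
  obtain ⟨V, hV, huV, hvV⟩ := exists_isClopen_of_totally_separated huv
  obtain ⟨f, hf0, hf1⟩ := hchar V hV
  obtain ⟨g, hg0, hg1⟩ := hchar Vᶜ hV.compl
  have hsupp : ∀ z, f z = y0 ∨ g z = y0 := fun z =>
    (em (z ∈ V)).imp (hf0 z) (hg0 z)
  rcases hprime.2 f g fun z _ => pmul_apply_eq_of_disjoint_support hc habs hsupp z with h | h
  · exact h10 (hf1 v hvV ▸ h v hv)
  · exact h10 (hg1 u (not_not.2 huV) ▸ h u hu)

end VanishingIdeal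

theorem stmt11_general {Z Y : Type*} [TopologicalSpace Z] [TopologicalSpace Y]
    [TotallySeparatedSpace Z] [Mul Y]
    (hc : Continuous fun p : Y × Y => p.1 * p.2)
    (y0 y1 : Y) (habs : ∀ y : Y, y0 * y = y0 ∧ y * y0 = y0)
    (h10 : y1 ≠ y0)
    (hnzd : ∀ a b : Y, a * b = y0 → a = y0 ∨ b = y0)
    (hchar : ∀ U : Set Z, IsClopen U →
      ∃ χ : C(Z, Y), (∀ z ∈ U, χ z = y0) ∧ (∀ z ∉ U, χ z = y1))
    (U : Set Z) (hU : U.Nonempty) :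
    (({f : C(Z, Y) | ∀ z ∈ U, f z = y0} : Set C(Z, Y)) ≠ Set.univ ∧
      ∀ f g : C(Z, Y), pmul hc f g ∈ {f : C(Z, Y) | ∀ z ∈ U, f z = y0} →
        f ∈ {f : C(Z, Y) | ∀ z ∈ U, f z = y0} ∨
        g ∈ {f : C(Z, Y) | ∀ z ∈ U, f z = y0}) ↔
    ∃ z : Z, U = {z} := by
  constructor
  · intro hprime
    obtain ⟨u, hu⟩ := hU
    have hsub := subsingleton_of_isPrimeSet_vanishingOn hc habs h10 hchar hprime
    exact ⟨u, hsub.eq_singleton_of_mem hu⟩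
  · rintro ⟨z, rfl⟩
    exact isPrimeSet_vanishingOn_singleton hc h10 hnzd z

theorem stmt11 {Z Y : Type*} [TopologicalSpace Z] [TopologicalSpace Y]
    [TotallySeparatedSpace Z] [Mul Y]
    (hc : Continuous fun p : Y × Y => p.1 * p.2)
    (y0 y1 : Y) (habs : ∀ y : Y, y0 * y = y0 ∧ y * y0 = y0)
    (hunit : ∀ y : Y, y * y1 = y ∧ y1 * y = y) (h10 : y1 ≠ y0)
    (hnzd : ∀ a b : Y, a * b = y0 → a = y0 ∨ b = y0)
    (hchar : ∀ U : Set Z, IsClopen U →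
      ∃ χ : C(Z, Y), (∀ z ∈ U, χ z = y0) ∧ (∀ z ∉ U, χ z = y1))
    (U : Set Z) (hU : U.Nonempty) :
    (({f : C(Z, Y) | ∀ z ∈ U, f z = y0} : Set C(Z, Y)) ≠ Set.univ ∧
      ∀ f g : C(Z, Y), pmul hc f g ∈ {f : C(Z, Y) | ∀ z ∈ U, f z = y0} →
        f ∈ {f : C(Z, Y) | ∀ z ∈ U, f z = y0} ∨
        g ∈ {f : C(Z, Y) | ∀ z ∈ U, f z = y0}) ↔
    ∃ z : Z, U = {z} :=
  stmt11_general hc y0 y1 habs h10 hnzd hchar U hU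
end

section
/- Let Z be totally separated, Y have operations with 0 and 1 satisfying χ_U + χ_{U^c} = Id for clopen U. If I₁ ⊆ I₂ are ideals of C(Z,Y) with I₁ prime and I₂ ≠ C(Z,Y), then for every clopen U: χ_U ∈ I₁ if and only if χ_U ∈ I₂. -/
def padd {Z Y : Type*} [TopologicalSpace Z] [TopologicalSpace Y] [Add Y]
    (hca : Continuous fun p : Y × Y => p.1 + p.2) (f g : C(Z, Y)) : C(Z, Y) :=
  ⟨fun z => f z + g z, hca.comp (f.continuous.prodMk g.continuous)⟩

section

variable {Z Y : Type*} [TopologicalSpace Z] [TopologicalSpace Y]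

theorem pmul_eq_const_of_absorbing [Mul Y] (hc : Continuous fun p : Y × Y => p.1 * p.2)
    {y0 : Y} (habs : ∀ y : Y, y0 * y = y0 ∧ y * y0 = y0) {f g : C(Z, Y)}
    (hfg : ∀ z, f z = y0 ∨ g z = y0) :
    pmul hc f g = ContinuousMap.const Z y0 := by
  ext z
  rcases hfg z with hf | hg
  · simp [pmul, hf, (habs _).1]
  · simp [pmul, hg, (habs _).2]

theorem padd_eq_const_of_complementary [Add Y] (hca : Continuous fun p : Y × Y => p.1 + p.2)
    {y0 y1 : Y} (hadd : y0 + y1 = y1 ∧ y1 + y0 = y1) {f g : C(Z, Y)}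
    (hfg : ∀ z, (f z = y0 ∧ g z = y1) ∨ (f z = y1 ∧ g z = y0)) :
    padd hca f g = ContinuousMap.const Z y1 := by
  ext z
  rcases hfg z with ⟨hf, hg⟩ | ⟨hf, hg⟩
  · simp [padd, hf, hg, hadd.1]
  · simp [padd, hf, hg, hadd.2]

theorem eq_univ_of_const_one_mem [Mul Y] (hc : Continuous fun p : Y × Y => p.1 * p.2)
    {y1 : Y} (hunit : ∀ y : Y, y * y1 = y) {I : Set C(Z, Y)}
    (hideal : ∀ f g : C(Z, Y), g ∈ I → pmul hc f g ∈ I)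
    (hone : ContinuousMap.const Z y1 ∈ I) :
    I = Set.univ := by
  refine Set.eq_univ_of_forall fun f => ?_
  have hf : pmul hc f (ContinuousMap.const Z y1) = f := by
    ext z
    simp [pmul, hunit]
  exact hf ▸ hideal f _ hone

end

theorem stmt13_general {Z Y : Type*} [TopologicalSpace Z] [TopologicalSpace Y]
    [Mul Y] [Add Y]
    (hc : Continuous fun p : Y × Y => p.1 * p.2)
    (hca : Continuous fun p : Y × Y => p.1 + p.2)
    (y0 y1 : Y) (habs : ∀ y : Y, y0 * y = y0 ∧ y * y0 = y0)
    (hunit : ∀ y : Y, y * y1 = y) (hadd : y0 + y1 = y1 ∧ y1 + y0 = y1)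
    (I1 I2 : Set C(Z, Y)) (hsub : I1 ⊆ I2)
    (hI1Theta : ContinuousMap.const Z y0 ∈ I1)
    (hI1prime : ∀ f g : C(Z, Y), pmul hc f g ∈ I1 → f ∈ I1 ∨ g ∈ I1)
    (hI2ideal : ∀ f g : C(Z, Y), g ∈ I2 → pmul hc f g ∈ I2)
    (hI2add : ∀ f g : C(Z, Y), f ∈ I2 → g ∈ I2 → padd hca f g ∈ I2)
    (hI2ne : I2 ≠ Set.univ)
    (U : Set Z)
    (χU χUc : C(Z, Y))
    (hχU : (∀ z ∈ U, χU z = y0) ∧ (∀ z ∉ U, χU z = y1))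
    (hχUc : (∀ z ∈ Uᶜ, χUc z = y0) ∧ (∀ z ∉ Uᶜ, χUc z = y1)) :
    χU ∈ I1 ↔ χU ∈ I2 := by
  refine ⟨fun h1 => hsub h1, fun h2 => ?_⟩
  have hprod : pmul hc χU χUc = ContinuousMap.const Z y0 :=
    pmul_eq_const_of_absorbing hc habs fun z => by
      by_cases hz : z ∈ U
      · exact Or.inl (hχU.1 z hz)
      · exact Or.inr (hχUc.1 z hz)
  refine (hI1prime χU χUc (hprod ▸ hI1Theta)).resolve_right fun hUc => hI2ne ?_
  have hsum : padd hca χU χUc = ContinuousMap.const Z y1 :=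
    padd_eq_const_of_complementary hca hadd fun z => by
      by_cases hz : z ∈ U
      · exact Or.inl ⟨hχU.1 z hz, hχUc.2 z (Set.notMem_compl_iff.mpr hz)⟩
      · exact Or.inr ⟨hχU.2 z hz, hχUc.1 z hz⟩
  exact eq_univ_of_const_one_mem hc hunit hI2ideal (hsum ▸ hI2add χU χUc h2 (hsub hUc))

theorem stmt13 {Z Y : Type*} [TopologicalSpace Z] [TopologicalSpace Y]
    [TotallySeparatedSpace Z] [Mul Y] [Add Y]
    (hc : Continuous fun p : Y × Y => p.1 * p.2)
    (hca : Continuous fun p : Y × Y => p.1 + p.2)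
    (y0 y1 : Y) (habs : ∀ y : Y, y0 * y = y0 ∧ y * y0 = y0)
    (hunit : ∀ y : Y, y * y1 = y) (hadd : y0 + y1 = y1 ∧ y1 + y0 = y1)
    (I1 I2 : Set C(Z, Y)) (hsub : I1 ⊆ I2)
    (hI1Theta : ContinuousMap.const Z y0 ∈ I1)
    (hI1ideal : ∀ f g : C(Z, Y), g ∈ I1 → pmul hc f g ∈ I1)
    (hI1prime : ∀ f g : C(Z, Y), pmul hc f g ∈ I1 → f ∈ I1 ∨ g ∈ I1)
    (hI2ideal : ∀ f g : C(Z, Y), g ∈ I2 → pmul hc f g ∈ I2)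
    (hI2add : ∀ f g : C(Z, Y), f ∈ I2 → g ∈ I2 → padd hca f g ∈ I2)
    (hI2ne : I2 ≠ Set.univ)
    (U : Set Z) (hU : IsClopen U)
    (χU χUc : C(Z, Y))
    (hχU : (∀ z ∈ U, χU z = y0) ∧ (∀ z ∉ U, χU z = y1))
    (hχUc : (∀ z ∈ Uᶜ, χUc z = y0) ∧ (∀ z ∉ Uᶜ, χUc z = y1)) :
    χU ∈ I1 ↔ χU ∈ I2 :=
  stmt13_general hc hca y0 y1 habs hunit hadd I1 I2 hsub hI1Theta hI1prime hI2ideal hI2add hI2ne U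
    χU χUc hχU hχUc
end
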